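/- Let ε > 0 and let μ be a K-Voronoi probability measure on ℝ^D × {0,1} with respect to vectors θ_1, …, θ_K ∈ ℝ^D that is globally balanced, i.e. μ(Z=0) = μ(Z=1) = 1/2, and suppose that I_V(X → Z) < ε, where V is the family of binary log-linear models on ℝ^D (the guardedness hypothesis). Then for every η > 0 there exists a multiclass log-linear model — given by the parameter vectors θ*_{s'} = Σ_{k=1}^K s'_k θ_k for s' ∈ {−1,1}^K, whose argmax prediction Ŷ = argmax_{s'∈{−1,1}^K} θ*_{s'}ᵀX is μ-almost surely uniquely defined — such that I_V(Ŷ → Z) > 1 − η, where Ŷ is encoded as a one-hot vector in ℝ^{2^K}, V denotes the family of binary log-linear models on ℝ^{2^K}, and V-information is computed with logarithms to base 2. -/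

import Mathlib

open MeasureTheory
open scoped BigOperators

/-- The logistic function `σ(u) = 1/(1+exp(−u))`. -/
noncomputable def logistic (u : ℝ) : ℝ := 1 / (1 + Real.exp (-u))

/-- A binary log-linear model with parameters `a, γ`: the conditional probability it
assigns to the label `z ∈ {0,1}` (encoded as a `Bool`) given input `x`, namely
`q(1|x) = σ(aᵀx+γ)` and `q(0|x) = 1 − σ(aᵀx+γ)`. -/
noncomputable def qLogLin {ι : Type*} [Fintype ι] (a : ι → ℝ) (γ : ℝ)
    (x : ι → ℝ) (z : Bool) : ℝ :=
  if z then logistic ((∑ i, a i * x i) + γ) else 1 - logistic ((∑ i, a i * x i) + γ)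

/-- The conditional `V`-entropy `H_V(Z|X) = −sup_{q∈V} E[log₂ q(z|x)]` for the family
`V` of binary log-linear models (logarithms to base 2). -/
noncomputable def condEntLL {ι : Type*} [Fintype ι]
    (μ : Measure ((ι → ℝ) × Bool)) : ℝ :=
  - ⨆ p : (ι → ℝ) × ℝ, ∫ w, Real.logb 2 (qLogLin p.1 p.2 w.1 w.2) ∂μ

/-- The `V`-entropy `H_V(Z) = −sup E[log₂ q(z)]` over input-independent members of `V`
(those with `a = 0`). -/
noncomputable def entLL {ι : Type*} [Fintype ι]
    (μ : Measure ((ι → ℝ) × Bool)) : ℝ :=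
  - ⨆ γ : ℝ, ∫ w, Real.logb 2 (qLogLin (fun _ : ι => (0:ℝ)) γ w.1 w.2) ∂μ

/-- The `V`-information `I_V(X → Z) = H_V(Z) − H_V(Z|X)` (base-2 logarithms). -/
noncomputable def vInfoLL {ι : Type*} [Fintype ι]
    (μ : Measure ((ι → ℝ) × Bool)) : ℝ :=
  entLL μ - condEntLL μ

/-- The score of `x` under the linear classifier with parameter vector
`θ*_{s'} = Σ_k s'_k θ_k`, where the sign pattern `s'` is encoded as a Boolean vector
(`true ↦ +1`, `false ↦ −1`): `θ*_{s'}ᵀx = Σ_k s'_k (θ_kᵀx)`. -/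
noncomputable def signScore {D K : ℕ} (θ : Fin K → Fin D → ℝ) (x : Fin D → ℝ)
    (s' : Fin K → Bool) : ℝ :=
  ∑ k, (if s' k then (1:ℝ) else -1) * (∑ d, θ k d * x d)

/-- The sign pattern of `x` with respect to `θ_1, …, θ_K`. -/
noncomputable def sgnPattern {D K : ℕ} (θ : Fin K → Fin D → ℝ) (x : Fin D → ℝ) :
    Fin K → Bool :=
  fun k => decide (0 < ∑ d, θ k d * x d)

/-! Off the hyperplanes `θ_kᵀx = 0` the score `Σ_k s'_k θ_kᵀx` is maximised exactly by the sign
pattern of `x`, so `Ŷ` is the sign region of `X`, and in the one-hot encoding the label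
`z = g(Ŷ)` is a linear function of `Ŷ` with values `±1`. Scaling that functional by `c` gives a
binary log-linear model with `q(z|Ŷ) = σ(c)` almost surely, so `H_V(Z|Ŷ) ≤ -log₂ σ(c) → 0`,
while balance gives `H_V(Z) ≥ 1` because `σ(γ)(1 - σ(γ)) ≤ 1/4`. -/

open Filter Topology Real

lemma logistic_eq_sigmoid : logistic = sigmoid :=
  funext fun u => by rw [logistic, sigmoid_def, one_div]

section LogLinear

variable {ι : Type*} [Fintype ι]

lemma qLogLin_eq_sigmoid (a : ι → ℝ) (γ : ℝ) (x : ι → ℝ) (z : Bool) :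
    qLogLin a γ x z =
      sigmoid (if z then (∑ i, a i * x i) + γ else -((∑ i, a i * x i) + γ)) := by
  cases z <;> simp only [qLogLin, logistic_eq_sigmoid, Bool.false_eq_true, if_false, if_true,
    sigmoid_neg]

lemma logb_qLogLin_nonpos (a : ι → ℝ) (γ : ℝ) (x : ι → ℝ) (z : Bool) :
    logb 2 (qLogLin a γ x z) ≤ 0 := by
  rw [qLogLin_eq_sigmoid]
  exact logb_nonpos one_lt_two (sigmoid_nonneg _) (sigmoid_le_one _)

lemma integral_comp_snd_of_balanced {α : Type*} [MeasurableSpace α]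
    {ν : Measure (α × Bool)} [IsFiniteMeasure ν]
    (h0 : ν {w | w.2 = false} = 1/2) (h1 : ν {w | w.2 = true} = 1/2) (f : Bool → ℝ) :
    ∫ w, f w.2 ∂ν = (f false + f true) / 2 := by
  have hlabel : ∀ b, (ν.map Prod.snd).real {b} = ν.real {w | w.2 = b} := fun b =>
    map_measureReal_apply measurable_snd (measurableSet_singleton b)
  rw [← integral_map measurable_snd.aemeasurable (measurable_of_countable f).aestronglyMeasurable,
    integral_fintype Integrable.of_finite, Fintype.sum_bool, hlabel, hlabel,
    measureReal_def, measureReal_def, h0, h1]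
  norm_num
  ring

lemma one_le_entLL_of_balanced {ν : Measure ((ι → ℝ) × Bool)} [IsFiniteMeasure ν]
    (h0 : ν {w | w.2 = false} = 1/2) (h1 : ν {w | w.2 = true} = 1/2) :
    1 ≤ entLL ν := by
  suffices ∀ γ, ∫ w, logb 2 (qLogLin (fun _ : ι => (0:ℝ)) γ w.1 w.2) ∂ν ≤ -1 by
    have := ciSup_le this
    rw [entLL]; linarith
  intro γ
  simp only [qLogLin_eq_sigmoid, zero_mul, Finset.sum_const_zero, zero_add]
  rw [integral_comp_snd_of_balanced h0 h1 (fun z => logb 2 (sigmoid (if z then γ else -γ)))]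
  simp only [Bool.false_eq_true, if_false, if_true, sigmoid_neg]
  have hpos := sigmoid_pos γ
  have hlt := sigmoid_lt_one γ
  have hprod : logb 2 (1 - sigmoid γ) + logb 2 (sigmoid γ) ≤ logb 2 (2 ^ (-2 : ℝ)) := by
    rw [← logb_mul (by linarith) hpos.ne']
    refine logb_le_logb_of_le one_lt_two (by nlinarith) ?_
    norm_num
    nlinarith [sq_nonneg (sigmoid γ - 1/2)]
  rw [logb_rpow two_pos (by norm_num)] at hprod
  linarith

lemma condEntLL_le_of_ae_eq {ν : Measure ((ι → ℝ) × Bool)} [IsProbabilityMeasure ν]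
    (a : ι → ℝ) (γ c : ℝ)
    (h : ∀ᵐ w ∂ν, (∑ i, a i * w.1 i) + γ = if w.2 then c else -c) :
    condEntLL ν ≤ -logb 2 (sigmoid c) := by
  have hbdd : BddAbove (Set.range fun p : (ι → ℝ) × ℝ =>
      ∫ w, logb 2 (qLogLin p.1 p.2 w.1 w.2) ∂ν) :=
    ⟨0, Set.forall_mem_range.2 fun p =>
      integral_nonpos fun w => logb_qLogLin_nonpos p.1 p.2 w.1 w.2⟩
  have hint : ∫ w, logb 2 (qLogLin a γ w.1 w.2) ∂ν = logb 2 (sigmoid c) := by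
    rw [integral_congr_ae (g := fun _ => logb 2 (sigmoid c)), integral_const]
    · simp
    filter_upwards [h] with w hw
    rw [qLogLin_eq_sigmoid, hw]
    cases w.2 <;> simp
  have := le_ciSup hbdd (a, γ)
  rw [condEntLL]
  linarith

lemma tendsto_neg_logb_sigmoid_atTop :
    Tendsto (fun c => -logb 2 (sigmoid c)) atTop (𝓝 0) := by
  have := (tendsto_sigmoid_atTop.logb (b := 2) one_ne_zero).neg
  rwa [logb_one, neg_zero] at this

lemma one_sub_lt_vInfoLL_of_balanced_of_ae_eq {ν : Measure ((ι → ℝ) × Bool)}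
    [IsProbabilityMeasure ν]
    (h0 : ν {w | w.2 = false} = 1/2) (h1 : ν {w | w.2 = true} = 1/2) (a : ι → ℝ)
    (ha : ∀ᵐ w ∂ν, ∑ i, a i * w.1 i = if w.2 then 1 else -1) {η : ℝ} (hη : 0 < η) :
    1 - η < vInfoLL ν := by
  obtain ⟨c, hc⟩ := (tendsto_neg_logb_sigmoid_atTop.eventually (gt_mem_nhds hη)).exists
  have hcond : condEntLL ν ≤ -logb 2 (sigmoid c) := by
    refine condEntLL_le_of_ae_eq (fun i => c * a i) 0 c ?_
    filter_upwards [ha] with w hw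
    simp_rw [mul_assoc, ← Finset.mul_sum, hw]
    cases w.2 <;> simp
  have hent := one_le_entLL_of_balanced h0 h1
  rw [vInfoLL]
  linarith

end LogLinear

section SignPattern

variable {D K : ℕ}

lemma measurable_sgnPattern (θ : Fin K → Fin D → ℝ) : Measurable (sgnPattern θ) := by
  refine measurable_pi_lambda _ fun k => measurable_to_bool ?_
  have : MeasurableSet {x : Fin D → ℝ | 0 < ∑ d, θ k d * x d} :=
    measurableSet_lt measurable_const (by fun_prop)
  simpa [sgnPattern, Set.preimage] using this

lemma sign_mul_le_abs (b : Bool) (v : ℝ) : (if b then (1:ℝ) else -1) * v ≤ |v| := by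
  cases b <;> simp [neg_le_abs, le_abs_self]

lemma sign_mul_lt_abs {b : Bool} {v : ℝ} (hv : v ≠ 0) (hb : b ≠ decide (0 < v)) :
    (if b then (1:ℝ) else -1) * v < |v| := by
  rcases hv.lt_or_gt with hv | hv
  · obtain rfl : b = true := by simpa [hv.not_gt] using hb
    simp only [if_true, one_mul, abs_of_neg hv]
    linarith
  · obtain rfl : b = false := by simpa [hv] using hb
    simp only [Bool.false_eq_true, if_false, neg_one_mul, abs_of_pos hv]
    linarith

lemma signScore_sgnPattern (θ : Fin K → Fin D → ℝ) (x : Fin D → ℝ) :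
    signScore θ x (sgnPattern θ x) = ∑ k, |∑ d, θ k d * x d| := by
  refine Finset.sum_congr rfl fun k _ => ?_
  rcases lt_or_ge 0 (∑ d, θ k d * x d) with h | h
  · simp [sgnPattern, h, abs_of_pos]
  · simp [sgnPattern, not_lt.2 h, abs_of_nonpos h]

lemma signScore_lt_signScore_sgnPattern {θ : Fin K → Fin D → ℝ} {x : Fin D → ℝ}
    (hx : ∀ k, ∑ d, θ k d * x d ≠ 0) {s' : Fin K → Bool} (hs' : s' ≠ sgnPattern θ x) :
    signScore θ x s' < signScore θ x (sgnPattern θ x) := by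
  rw [signScore_sgnPattern]
  obtain ⟨k, hk⟩ := Function.ne_iff.mp hs'
  exact Finset.sum_lt_sum (fun k _ => sign_mul_le_abs _ _)
    ⟨k, Finset.mem_univ k, sign_mul_lt_abs (hx k) hk⟩

end SignPattern

theorem multiclass_breaks_guardedness_general
    (D K : ℕ)
    (μ : Measure ((Fin D → ℝ) × Bool)) [IsProbabilityMeasure μ]
    (θ : Fin K → Fin D → ℝ)
    (hne : ∀ᵐ w ∂μ, ∀ k, (∑ d, θ k d * w.1 d) ≠ 0)
    (g : (Fin K → Bool) → Bool)
    (hg : ∀ᵐ w ∂μ, w.2 = g (sgnPattern θ w.1))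
    (hbal0 : μ {w | w.2 = false} = 1/2) (hbal1 : μ {w | w.2 = true} = 1/2) :
    ∀ η > (0:ℝ),
      (∀ᵐ w ∂μ, ∀ s' : Fin K → Bool, s' ≠ sgnPattern θ w.1 →
          signScore θ w.1 s' < signScore θ w.1 (sgnPattern θ w.1)) ∧
      vInfoLL (μ.map (fun w =>
          ((fun s' : Fin K → Bool => if s' = sgnPattern θ w.1 then (1:ℝ) else 0), w.2)))
        > 1 - η := by
  intro η hη
  refine ⟨hne.mono fun w hw s' hs' => signScore_lt_signScore_sgnPattern hw hs', ?_⟩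
  set F : (Fin D → ℝ) × Bool → ((Fin K → Bool) → ℝ) × Bool :=
    fun w => ((fun s' => if s' = sgnPattern θ w.1 then (1:ℝ) else 0), w.2)
  have hOneHot : Measurable fun s : Fin K → Bool => fun s' => if s' = s then (1:ℝ) else 0 :=
    measurable_of_countable _
  have hF : Measurable F :=
    (hOneHot.comp ((measurable_sgnPattern θ).comp measurable_fst)).prodMk measurable_snd
  have hlabel : ∀ b, μ.map F {w | w.2 = b} = μ {w | w.2 = b} := fun b =>
    Measure.map_apply hF (measurable_snd (measurableSet_singleton b))
  have := Measure.isProbabilityMeasure_map (μ := μ) hF.aemeasurable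
  refine one_sub_lt_vInfoLL_of_balanced_of_ae_eq ((hlabel false).trans hbal0)
    ((hlabel true).trans hbal1) (fun s => if g s then 1 else -1) ?_ hη
  refine (ae_map_iff hF.aemeasurable (measurableSet_eq_fun (by fun_prop) ?_)).2 ?_
  · exact (measurable_of_countable fun b : Bool => if b then (1:ℝ) else -1).comp measurable_snd
  filter_upwards [hg] with w hw
  simp [F, hw]

/-- Multiclass log-linear models can break log-linear guardedness: if `μ` is a
globally balanced `K`-Voronoi distribution on `ℝ^D × {0,1}` which is `ε`-guarded with
respect to binary log-linear models (`I_V(X → Z) < ε`), then for every `η > 0` the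
multiclass log-linear model with parameter vectors `θ*_{s'} = Σ_k s'_k θ_k`
(`s' ∈ {−1,1}^K`) has a μ-a.s. uniquely defined argmax prediction
`Ŷ = argmax_{s'} θ*_{s'}ᵀX` — the sign pattern of `X` — and, encoding `Ŷ` as a one-hot
vector in `ℝ^{2^K}`, it satisfies `I_V(Ŷ → Z) > 1 − η` (base-2 logarithms). -/
theorem multiclass_breaks_guardedness
    (D K : ℕ) (ε : ℝ) (hε : 0 < ε)
    (μ : Measure ((Fin D → ℝ) × Bool)) [IsProbabilityMeasure μ]
    (θ : Fin K → Fin D → ℝ)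
    (hne : ∀ᵐ w ∂μ, ∀ k, (∑ d, θ k d * w.1 d) ≠ 0)
    (g : (Fin K → Bool) → Bool)
    (hg : ∀ᵐ w ∂μ, w.2 = g (sgnPattern θ w.1))
    (hbal0 : μ {w | w.2 = false} = 1/2) (hbal1 : μ {w | w.2 = true} = 1/2)
    (hguard : vInfoLL μ < ε) :
    ∀ η > (0:ℝ),
      (∀ᵐ w ∂μ, ∀ s' : Fin K → Bool, s' ≠ sgnPattern θ w.1 →
          signScore θ w.1 s' < signScore θ w.1 (sgnPattern θ w.1)) ∧
      vInfoLL (μ.map (fun w =>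
          ((fun s' : Fin K → Bool => if s' = sgnPattern θ w.1 then (1:ℝ) else 0), w.2)))
        > 1 - η :=
  multiclass_breaks_guardedness_general D K μ θ hne g hg hbal0 hbal1
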